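/- In a finite concurrent reachability game ⟨C,⊤⟩, the set Bad equals the set SubMaxQ_A of sub-maximizable states and Sec(Bad) equals the set MaxQ_A of maximizable states. Furthermore, for every ε > 0 there exists a positional Player A strategy s_A that is optimal from every state in MaxQ_A and ε-optimal from every state in SubMaxQ_A. -/

import Mathlib

open scoped BigOperators Classical

noncomputable section

/-- A probability distribution on a finite type. -/
def FDist (X : Type) [Fintype X] : Type :=
  { p : X → ℝ // (∀ x, 0 ≤ p x) ∧ ∑ x, p x = 1 }

namespace CRG

variable {A B Q D : Type} [Fintype A] [Fintype B] [Fintype Q] [Fintype D]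

/-- The support of a distribution. -/
def supp {X : Type} [Fintype X] (σ : FDist X) : Set X := { x | σ.1 x ≠ 0 }

/-- The Dirac distribution. -/
def dirac {X : Type} [Fintype X] [DecidableEq X] (x : X) : FDist X :=
  ⟨fun y => if y = x then 1 else 0, by
    constructor
    · intro y
      dsimp only
      split <;> norm_num
    · simp⟩

/-- Outcome of a pair of mixed strategies in the game in normal form with payoff `u`. -/
def out (u : A → B → ℝ) (σA : FDist A) (σB : FDist B) : ℝ :=
  ∑ a, ∑ b, σA.1 a * σB.1 b * u a b

/-- Outcome of a mixed strategy of Player A against a pure action of Player B. -/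
def outB (u : A → B → ℝ) (σA : FDist A) (b : B) : ℝ :=
  ∑ a, σA.1 a * u a b

/-- The value of a Player A mixed strategy in a game in normal form. -/
def valStratGF (u : A → B → ℝ) (σA : FDist A) : ℝ :=
  ⨅ σB : FDist B, out u σA σB

/-- The (von Neumann) value of a finite game in normal form. -/
def valGF (u : A → B → ℝ) : ℝ :=
  ⨆ σA : FDist A, valStratGF u σA

/-- The optimal Player A mixed strategies in a game in normal form. -/
def OptA (u : A → B → ℝ) : Set (FDist A) := { σA | valStratGF u σA = valGF u }

/-- The optimal actions of Player B against the Player A mixed strategy `σA`. -/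
def optActs (u : A → B → ℝ) (σA : FDist A) : Set B :=
  { b | outB u σA b = valStratGF u σA }

/-- μ_v : the lift of a valuation of the states to the Nature states. -/
def lift (dist : D → FDist Q) (v : Q → ℝ) (d : D) : ℝ := ∑ q, (dist d).1 q * v q

/-- The payoff function of the local interaction `F_q` valued by `μ_m`. -/
def locPay (δ : Q → A → B → D) (dist : D → FDist Q) (m : Q → ℝ) (q : Q) : A → B → ℝ :=
  fun a b => lift dist m (δ q a b)

/-- One-step transition probability between states. -/
def step (δ : Q → A → B → D) (dist : D → FDist Q) (σA : FDist A) (σB : FDist B)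
    (q q' : Q) : ℝ :=
  ∑ a, ∑ b, σA.1 a * σB.1 b * (dist (δ q a b)).1 q'

/-- The operator Δ on valuations of the states. -/
def Δop (δ : Q → A → B → D) (dist : D → FDist Q) (T : Q) (v : Q → ℝ) : Q → ℝ :=
  fun q => if q = T then 1 else valGF (fun a b => lift dist v (δ q a b))

/-- The target `T` is an absorbing (self-looping) sink. -/
def Absorbing (δ : Q → A → B → D) (dist : D → FDist Q) (T : Q) : Prop :=
  ∀ a b, (dist (δ T a b)).1 = fun q => if q = T then 1 else 0

/-- `m` is the least fixed point of Δ on `[0,1]^Q`. -/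
def IsLfpDelta (δ : Q → A → B → D) (dist : D → FDist Q) (T : Q) (m : Q → ℝ) : Prop :=
  (∀ q, m q ∈ Set.Icc (0:ℝ) 1) ∧ Δop δ dist T m = m ∧
    ∀ v : Q → ℝ, (∀ q, v q ∈ Set.Icc (0:ℝ) 1) → Δop δ dist T v = v → ∀ q, m q ≤ v q

/-- A strategy: a history of past states together with the current state gives a
mixed action.  (This encodes maps `Q⁺ → 𝒟(X)`.) -/
def Strat (Q X : Type) [Fintype X] : Type := List Q → Q → FDist X

/-- Residual strategy after the history `π` has been played. -/
def residual {X : Type} [Fintype X] (s : Strat Q X) (π : List Q) : Strat Q X :=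
  fun h q => s (π ++ h) q

/-- The (positional) strategy associated with a per-state choice of mixed actions. -/
def ofPos {X : Type} [Fintype X] (s : Q → FDist X) : Strat Q X := fun _ q => s q

/-- Probability of reaching the set `S` within `n` steps from current state `q`,
history `h` having been played. -/
def reachSetNAux (δ : Q → A → B → D) (dist : D → FDist Q) (S : Set Q) :
    ℕ → Strat Q A → Strat Q B → List Q → Q → ℝ
  | 0, _, _, _, q => if q ∈ S then 1 else 0
  | n + 1, sA, sB, h, q =>
      if q ∈ S then 1
      else ∑ q', step δ dist (sA h q) (sB h q) q q' *
        reachSetNAux δ dist S n sA sB (h ++ [q]) q'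

/-- Probability of reaching the set `S` within `n` steps from state `q`. -/
def reachSetN (δ : Q → A → B → D) (dist : D → FDist Q) (S : Set Q) (n : ℕ)
    (sA : Strat Q A) (sB : Strat Q B) (q : Q) : ℝ :=
  reachSetNAux δ dist S n sA sB [] q

/-- Probability of reaching the target `T` within `n` steps from state `q`. -/
def reachN (δ : Q → A → B → D) (dist : D → FDist Q) (T : Q) (n : ℕ)
    (sA : Strat Q A) (sB : Strat Q B) (q : Q) : ℝ :=
  reachSetN δ dist {T} n sA sB q

/-- Probability of eventually reaching the target `T` from state `q`. -/
def reach (δ : Q → A → B → D) (dist : D → FDist Q) (T : Q)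
    (sA : Strat Q A) (sB : Strat Q B) (q : Q) : ℝ :=
  ⨆ n : ℕ, reachN δ dist T n sA sB q

/-- The value of a Player A strategy from state `q`. -/
def valA (δ : Q → A → B → D) (dist : D → FDist Q) (T : Q) (sA : Strat Q A) (q : Q) : ℝ :=
  ⨅ sB : Strat Q B, reach δ dist T sA sB q

/-- The value of the game from state `q`. -/
def value (δ : Q → A → B → D) (dist : D → FDist Q) (T : Q) (q : Q) : ℝ :=
  ⨆ sA : Strat Q A, valA δ dist T sA q

/-- A state is maximizable when Player A has an optimal strategy from it. -/
def Maximizable (δ : Q → A → B → D) (dist : D → FDist Q) (T q : Q) : Prop :=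
  ∃ sA : Strat Q A, valA δ dist T sA q = value δ dist T q

/-- A positional Player A strategy locally dominates the valuation `v`. -/
def LocallyDominates (δ : Q → A → B → D) (dist : D → FDist Q)
    (sA : Q → FDist A) (v : Q → ℝ) : Prop :=
  ∀ q, v q ≤ valStratGF (fun a b => lift dist v (δ q a b)) (sA q)

/-- Transition function ι of the MDP induced by a positional Player A strategy. -/
def stepB [DecidableEq B] (δ : Q → A → B → D) (dist : D → FDist Q)
    (sA : Q → FDist A) (q : Q) (b : B) (q' : Q) : ℝ :=
  step δ dist (sA q) (dirac b) q q'

/-- An end component of the MDP induced by the positional Player A strategy `sA`. -/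
structure EndComp [DecidableEq B] (δ : Q → A → B → D) (dist : D → FDist Q)
    (sA : Q → FDist A) where
  states : Set Q
  acts : Q → Set B
  acts_nonempty : ∀ q ∈ states, (acts q).Nonempty
  closed : ∀ q ∈ states, ∀ b ∈ acts q, ∀ q', stepB δ dist sA q b q' ≠ 0 → q' ∈ states
  connected : ∀ q ∈ states, ∀ q' ∈ states,
    Relation.ReflTransGen
      (fun x y => x ∈ states ∧ ∃ b ∈ acts x, stepB δ dist sA x b y ≠ 0) q q'

/-- `S_D` : the Nature states having a non-zero probability to reach `S`. -/
def natS (dist : D → FDist Q) (S : Set Q) : Set D :=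
  { d | ∃ q ∈ S, (dist d).1 q ≠ 0 }

/-- Progressive optimal local strategies at `q` w.r.t. the set `Gd`. -/
def Prog (δ : Q → A → B → D) (dist : D → FDist Q) (m : Q → ℝ) (q : Q)
    (Gd : Set Q) : Set (FDist A) :=
  { σA | σA ∈ OptA (locPay δ dist m q) ∧
      ∀ b ∈ optActs (locPay δ dist m q) σA, ∃ a ∈ supp σA, δ q a b ∈ natS dist Gd }

/-- Risky optimal local strategies at `q` w.r.t. the set `Bd`. -/
def Risk (δ : Q → A → B → D) (dist : D → FDist Q) (m : Q → ℝ) (q : Q)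
    (Bd : Set Q) : Set (FDist A) :=
  { σA | σA ∈ OptA (locPay δ dist m q) ∧
      ∃ b ∈ optActs (locPay δ dist m q) σA, ∃ a ∈ supp σA, δ q a b ∈ natS dist Bd }

/-- Efficient local strategies: progressive and not risky. -/
def Eff (δ : Q → A → B → D) (dist : D → FDist Q) (m : Q → ℝ) (q : Q)
    (Gd Bd : Set Q) : Set (FDist A) :=
  Prog δ dist m q Gd \ Risk δ dist m q Bd

/-- The increasing sequence of sets of secure states w.r.t. `Bd`. -/
def SecN (δ : Q → A → B → D) (dist : D → FDist Q) (m : Q → ℝ) (T : Q) (Bd : Set Q) :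
    ℕ → Set Q
  | 0 => {T}
  | n + 1 => SecN δ dist m T Bd n ∪
      { q | q ∉ Bd ∧ (Eff δ dist m q (SecN δ dist m T Bd n) Bd).Nonempty }

/-- The set of secure states w.r.t. `Bd`. -/
def Sec (δ : Q → A → B → D) (dist : D → FDist Q) (m : Q → ℝ) (T : Q) (Bd : Set Q) :
    Set Q :=
  (⋃ n : ℕ, SecN δ dist m T Bd n) ∪ { q | m q = 0 }

/-- The sequence of sets of bad states. -/
def BadN (δ : Q → A → B → D) (dist : D → FDist Q) (m : Q → ℝ) (T : Q) : ℕ → Set Q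
  | 0 => ∅
  | n + 1 => (Sec δ dist m T (BadN δ dist m T n))ᶜ

/-- The set of bad states. -/
def Bad (δ : Q → A → B → D) (dist : D → FDist Q) (m : Q → ℝ) (T : Q) : Set Q :=
  BadN δ dist m T (Fintype.card Q)

/-- `α[y]` : the total valuation extending the partial valuation `α : O∖E → [0,1]`
with the value `y` on `E`. -/
def extendVal {O : Type} (E : Set O) (α : O → ℝ) (y : ℝ) : O → ℝ :=
  fun o => if o ∈ E then y else α o

/-- The map `f_α : y ↦ val_{⟨F, α[y]⟩}`. -/
def fval {O : Type} (ρ : A → B → O) (E : Set O) (α : O → ℝ) (y : ℝ) : ℝ :=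
  valGF (fun a b => extendVal E α y (ρ a b))

/-- `v` is the least fixed point of `f_α` on `[0,1]`. -/
def IsLfpVal {O : Type} (ρ : A → B → O) (E : Set O) (α : O → ℝ) (v : ℝ) : Prop :=
  v ∈ Set.Icc (0:ℝ) 1 ∧ fval ρ E α v = v ∧
    ∀ y ∈ Set.Icc (0:ℝ) 1, fval ρ E α y = y → v ≤ y

/-- The game form `ρ` is reach-maximizable w.r.t. the partial valuation `α : O∖E → [0,1]`. -/
def RMwrt {O : Type} (ρ : A → B → O) (E : Set O) (α : O → ℝ) : Prop :=
  ∀ v : ℝ, IsLfpVal ρ E α v →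
    v = 0 ∨
      ∃ σA ∈ OptA (fun a b => extendVal E α v (ρ a b)),
        ∀ b ∈ optActs (fun a b => extendVal E α v (ρ a b)) σA,
          ∃ a ∈ supp σA, ρ a b ∉ E

/-- A reach-maximizable game form: RM w.r.t. every partial valuation of its outcomes. -/
def RMform {O : Type} (ρ : A → B → O) : Prop :=
  ∀ (E : Set O) (α : O → ℝ), (∀ o ∉ E, α o ∈ Set.Icc (0:ℝ) 1) → RMwrt ρ E α

/-- A determined game form. -/
def Determined {O : Type} (ρ : A → B → O) : Prop :=
  ∀ E : Set O, (∃ a, ∀ b, ρ a b ∈ E) ∨ (∃ b, ∀ a, ρ a b ∉ E)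

/-- Transition function of the three-state reachability game `C_{(F,α)}`:
state `0` is `q₀`, state `1` is the target `⊤`, state `2` is the bin `⊥`. -/
def triδ {O : Type} (ρ : A → B → O) (E : Set O) :
    Fin 3 → A → B → (Fin 3 ⊕ {o : O // o ∉ E}) :=
  fun s a b =>
    if s = 0 then
      if h : ρ a b ∈ E then Sum.inl 0 else Sum.inr ⟨ρ a b, h⟩
    else Sum.inl s

/-- Nature distributions of the three-state reachability game `C_{(F,α)}`. -/
def triDist {O : Type} (E : Set O) (α : O → ℝ)
    (hα : ∀ o ∉ E, α o ∈ Set.Icc (0:ℝ) 1) :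
    (Fin 3 ⊕ {o : O // o ∉ E}) → FDist (Fin 3) := fun d =>
  match d with
  | Sum.inl t => dirac t
  | Sum.inr x =>
      ⟨![0, α x.1, 1 - α x.1], by
        obtain ⟨h0, h1⟩ := hα x.1 x.2
        constructor
        · intro s
          fin_cases s <;> simp <;> linarith
        · simp [Fin.sum_univ_three]⟩

/-- An abstract (finite) game form with actions `A` and `B`. -/
structure GameForm (A B : Type) where
  O : Type
  fin : Fintype O
  ρ : A → B → O

/-- All local interactions of the arena `δ` belong to the set `𝒢` of game forms
(up to a renaming of the outcomes into Nature states). -/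
def UsesForms {Q D : Type} (𝒢 : Set (GameForm A B)) (δ : Q → A → B → D) : Prop :=
  ∀ q, ∃ F ∈ 𝒢, ∃ g : F.O → D, δ q = fun a b => g (F.ρ a b)

/-- The sequence of iterates of Δ starting from the valuation `1_{⊤}`. -/
def vseq (δ : Q → A → B → D) (dist : D → FDist Q) (T : Q) : ℕ → Q → ℝ
  | 0 => fun q => if q = T then 1 else 0
  | n + 1 => Δop δ dist T (vseq δ dist T n)

/-- Relevant paths w.r.t. the strategy `sA` from the state `q₀`: the pair `(h, q)`
encodes the path `h · q` (history `h`, current state `q`). -/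
inductive Relevant [DecidableEq B] (δ : Q → A → B → D) (dist : D → FDist Q)
    (m : Q → ℝ) (sA : Strat Q A) (q₀ : Q) : List Q → Q → Prop
  | base : Relevant δ dist m sA q₀ [] q₀
  | step {h : List Q} {q q' : Q} :
      Relevant δ dist m sA q₀ h q →
      (∃ b ∈ optActs (locPay δ dist m q) (sA h q),
        0 < CRG.step δ dist (sA h q) (dirac b) q q') →
      Relevant δ dist m sA q₀ (h ++ [q]) q'

end CRG

/-!
Player B answering optimally in every local game valued by `m` makes `m` a supermartingale,
so no strategy of Player A guarantees more than `m`. Conversely, for a discount factor close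
to `1` the discounted value `v` is `ε`-close to `m`, and wherever it is positive some local
strategy improves it strictly. Playing such strategies on `Bad` and efficient ones elsewhere
gives a positional strategy whose value dominates `v` on `Bad` and `m` off `Bad`: at a state
where the gap to this valuation is maximal and positive, an optimal answer of Player B would
have to keep the gap, which is impossible when `v` improves strictly or when the efficient
strategy makes progress towards states secured earlier. Hence `m` is the value and every state
outside `Bad` is maximizable. Finally, by induction on `n`, no strategy is optimal from a state
of `BadN n`: the local strategies of an optimal strategy along the play are optimal but not
efficient, so Player B can answer optimally while keeping the play in `BadN n` or among
states of value `0`, never reaching `⊤`.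
-/

instance {X : Type} [Fintype X] [Nonempty X] : Nonempty (FDist X) :=
  ⟨CRG.dirac (Classical.arbitrary X)⟩

namespace FDist

variable {X : Type} [Fintype X]

lemma nonneg (p : FDist X) (x : X) : 0 ≤ p.1 x := p.2.1 x

lemma sum_eq_one (p : FDist X) : ∑ x, p.1 x = 1 := p.2.2

lemma le_one (p : FDist X) (x : X) : p.1 x ≤ 1 :=
  (Finset.single_le_sum (f := p.1) (fun y _ => p.nonneg y) (Finset.mem_univ x)).trans_eq
    p.sum_eq_one

lemma sum_mul_const (p : FDist X) (c : ℝ) : ∑ x, p.1 x * c = c := by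
  rw [← Finset.sum_mul, p.sum_eq_one, one_mul]

end FDist

namespace CRG

lemma sum_dirac_mul {X : Type} [Fintype X] [DecidableEq X] (x : X) (f : X → ℝ) :
    ∑ y, (dirac x).1 y * f y = f x := by
  simp [dirac, ite_mul]

lemma eq_of_le_sum_mul {ι : Type} [Fintype ι] {c g : ι → ℝ} {d : ℝ} (hc : ∀ i, 0 ≤ c i)
    (hsum : ∑ i, c i = 1) (hg : ∀ i, g i ≤ d) (h : d ≤ ∑ i, c i * g i) {i : ι}
    (hi : c i ≠ 0) : g i = d := by
  have hgap : ∑ j, c j * (d - g j) = 0 := by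
    refine le_antisymm ?_ (Finset.sum_nonneg fun j _ => mul_nonneg (hc j) (sub_nonneg.2 (hg j)))
    simp only [mul_sub, Finset.sum_sub_distrib, ← Finset.sum_mul, hsum, one_mul]
    linarith
  have := (Finset.sum_eq_zero_iff_of_nonneg fun j _ =>
    mul_nonneg (hc j) (sub_nonneg.2 (hg j))).1 hgap i (Finset.mem_univ i)
  linarith [(mul_eq_zero.1 this).resolve_left hi]

lemma exists_pos_le_of_pos {ι : Type} [Finite ι] (g : ι → ℝ) :
    ∃ η > 0, ∀ i, 0 < g i → η ≤ g i := by
  cases isEmpty_or_nonempty {i // 0 < g i} with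
  | inl h => exact ⟨1, one_pos, fun i hi => (h.false ⟨i, hi⟩).elim⟩
  | inr h =>
    obtain ⟨⟨i₀, hi₀⟩, hmin⟩ := Finite.exists_min fun i : {i // 0 < g i} => g i
    exact ⟨g i₀, hi₀, fun i hi => hmin ⟨i, hi⟩⟩

lemma eq_apply_card_of_card_le {α : Type} [Fintype α] {f : ℕ → Set α} (G : Set α → Set α)
    (hf : ∀ n, f (n + 1) = G (f n)) (hmono : Monotone f) {n : ℕ} (hn : Fintype.card α ≤ n) :
    f n = f (Fintype.card α) := by
  obtain ⟨j, hj, hfj⟩ : ∃ j ≤ Fintype.card α, f (j + 1) = f j := by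
    -- otherwise `f 0 ⊂ f 1 ⊂ ⋯ ⊂ f (card α + 1)` is too long a chain of subsets of `α`
    by_contra! h
    have hgrow : ∀ k ≤ Fintype.card α + 1, k ≤ (f k).ncard := by
      intro k
      induction k with
      | zero => simp
      | succ k ih =>
        intro hk
        have h₁ : (f k).ncard < (f (k + 1)).ncard :=
          Set.ncard_lt_ncard ((hmono k.le_succ).ssubset_of_ne (h k (by omega)).symm)
        have h₂ := ih (by omega)
        omega
    have := (hgrow _ le_rfl).trans (Set.ncard_le_card _)
    rw [Nat.card_eq_fintype_card] at this
    omega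
  have hconst : ∀ i, j ≤ i → f i = f j := by
    intro i hi
    induction hi with
    | refl => rfl
    | step _ ih => rw [hf, ih, ← hf, hfj]
  rw [hconst n (hj.trans hn), hconst _ hj]

section FixedPoint

variable {Q : Type} [Finite Q]

lemma exists_iSup_le_add {x : ℕ → Q → ℝ} (hmono : ∀ q, Monotone fun n => x n q)
    (hbdd : ∀ n q, x n q ≤ 1) {ε : ℝ} (hε : 0 < ε) :
    ∃ N, ∀ q, ⨆ n, x n q ≤ x N q + ε := by
  have htends : ∀ q, Filter.Tendsto (fun n => x n q) Filter.atTop (nhds (⨆ n, x n q)) :=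
    fun q => tendsto_atTop_ciSup (hmono q) ⟨1, Set.forall_mem_range.2 fun n => hbdd n q⟩
  obtain ⟨N, hN⟩ := (Filter.eventually_all.2 fun q =>
    (htends q).eventually (lt_mem_nhds (sub_lt_self _ hε))).exists
  exact ⟨N, fun q => by linarith [hN q]⟩

lemma iSup_iterate_isFixedPt {F : (Q → ℝ) → Q → ℝ} (hmono : Monotone F)
    (hadd : ∀ v (c : ℝ), 0 ≤ c → F (v + fun _ => c) ≤ F v + fun _ => c)
    {x : Q → ℝ} (hx : x ≤ F x) (hbdd : ∀ n q, F^[n] x q ≤ 1) :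
    F (fun q => ⨆ n, F^[n] x q) = fun q => ⨆ n, F^[n] x q := by
  have hiter : Monotone fun n => F^[n] x := hmono.monotone_iterate_of_le_map hx
  have hle : ∀ n q, F^[n] x q ≤ ⨆ n, F^[n] x q := fun n q =>
    le_ciSup ⟨1, Set.forall_mem_range.2 fun n => hbdd n q⟩ n
  funext q
  refine le_antisymm (le_of_forall_pos_le_add fun ε hε => ?_)
    (ciSup_le fun n => (hiter n.le_succ q).trans ?_)
  · obtain ⟨N, hN⟩ := exists_iSup_le_add (fun q _ _ h => hiter h q) hbdd hε
    calc F (fun q => ⨆ n, F^[n] x q) q ≤ F (F^[N] x + fun _ => ε) q := hmono hN q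
      _ ≤ F (F^[N] x) q + ε := hadd _ ε hε.le q
      _ ≤ (⨆ n, F^[n] x q) + ε := by
          rw [← Function.iterate_succ_apply' F N x]
          linarith [hle (N + 1) q]
  · change F^[n + 1] x q ≤ _
    rw [Function.iterate_succ_apply']
    exact hmono (fun q => hle n q) q

end FixedPoint

instance {Q X : Type} [Fintype X] [Nonempty X] : Nonempty (Strat Q X) :=
  ⟨fun _ _ => Classical.arbitrary _⟩

section NormalForm

variable {A B : Type} [Fintype A]

lemma outB_le_outB_add {u u' : A → B → ℝ} {c : ℝ} (h : ∀ a b, u a b ≤ u' a b + c)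
    (σA : FDist A) (b : B) : outB u σA b ≤ outB u' σA b + c := by
  calc outB u σA b ≤ ∑ a, σA.1 a * (u' a b + c) :=
        Finset.sum_le_sum fun a _ => mul_le_mul_of_nonneg_left (h a b) (σA.nonneg a)
    _ = outB u' σA b + c := by simp only [mul_add, Finset.sum_add_distrib, σA.sum_mul_const]; rfl

lemma outB_mono {u u' : A → B → ℝ} (h : ∀ a b, u a b ≤ u' a b) (σA : FDist A) (b : B) :
    outB u σA b ≤ outB u' σA b := by
  simpa using outB_le_outB_add (c := 0) (by simpa using h) σA b

lemma outB_nonneg {u : A → B → ℝ} (h : ∀ a b, 0 ≤ u a b) (σA : FDist A) (b : B) :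
    0 ≤ outB u σA b :=
  Finset.sum_nonneg fun a _ => mul_nonneg (σA.nonneg a) (h a b)

lemma outB_le_one {u : A → B → ℝ} (h : ∀ a b, u a b ≤ 1) (σA : FDist A) (b : B) :
    outB u σA b ≤ 1 := by
  calc outB u σA b ≤ outB (fun _ _ => 1) σA b := outB_mono h σA b
    _ = 1 := σA.sum_mul_const 1

lemma outB_le_sum_abs (u : A → B → ℝ) (σA : FDist A) (b : B) :
    outB u σA b ≤ ∑ a, |u a b| :=
  Finset.sum_le_sum fun a _ => (mul_le_mul_of_nonneg_left (le_abs_self _) (σA.nonneg a)).trans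
    (mul_le_of_le_one_left (abs_nonneg _) (σA.le_one a))

variable [Fintype B]

lemma out_eq_sum_outB (u : A → B → ℝ) (σA : FDist A) (σB : FDist B) :
    out u σA σB = ∑ b, σB.1 b * outB u σA b := by
  simp only [out, outB, Finset.mul_sum]
  rw [Finset.sum_comm]
  exact Finset.sum_congr rfl fun b _ => Finset.sum_congr rfl fun a _ => by ring

lemma out_dirac [DecidableEq B] (u : A → B → ℝ) (σA : FDist A) (b : B) :
    out u σA (dirac b) = outB u σA b := by
  rw [out_eq_sum_outB, sum_dirac_mul]

lemma exists_lt_valStratGF [Nonempty A] {u : A → B → ℝ} {c : ℝ} (h : c < valGF u) :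
    ∃ σA, c < valStratGF u σA :=
  exists_lt_of_lt_ciSup h

variable [Nonempty B]

lemma valStratGF_eq_inf' (u : A → B → ℝ) (σA : FDist A) :
    valStratGF u σA = Finset.univ.inf' Finset.univ_nonempty (outB u σA) := by
  have hle : ∀ σB : FDist B,
      Finset.univ.inf' Finset.univ_nonempty (outB u σA) ≤ out u σA σB := by
    intro σB
    rw [out_eq_sum_outB, ← σB.sum_mul_const (Finset.univ.inf' Finset.univ_nonempty (outB u σA))]
    exact Finset.sum_le_sum fun b _ =>
      mul_le_mul_of_nonneg_left (Finset.inf'_le _ (Finset.mem_univ b)) (σB.nonneg b)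
  obtain ⟨b, -, hb⟩ := Finset.exists_mem_eq_inf' Finset.univ_nonempty (outB u σA)
  refine le_antisymm ?_ (le_ciInf hle)
  rw [hb, ← out_dirac]
  exact ciInf_le ⟨_, Set.forall_mem_range.2 hle⟩ _

lemma valStratGF_le_outB (u : A → B → ℝ) (σA : FDist A) (b : B) :
    valStratGF u σA ≤ outB u σA b := by
  rw [valStratGF_eq_inf']
  exact Finset.inf'_le _ (Finset.mem_univ b)

lemma valStratGF_le_out (u : A → B → ℝ) (σA : FDist A) (σB : FDist B) :
    valStratGF u σA ≤ out u σA σB := by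
  rw [out_eq_sum_outB, ← σB.sum_mul_const (valStratGF u σA)]
  exact Finset.sum_le_sum fun b _ =>
    mul_le_mul_of_nonneg_left (valStratGF_le_outB u σA b) (σB.nonneg b)

lemma exists_mem_optActs (u : A → B → ℝ) (σA : FDist A) : ∃ b, b ∈ optActs u σA := by
  obtain ⟨b, -, hb⟩ := Finset.exists_mem_eq_inf' Finset.univ_nonempty (outB u σA)
  exact ⟨b, by rw [optActs, valStratGF_eq_inf', hb]; rfl⟩

lemma valStratGF_le_valStratGF_add {u u' : A → B → ℝ} {c : ℝ}
    (h : ∀ a b, u a b ≤ u' a b + c) (σA : FDist A) :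
    valStratGF u σA ≤ valStratGF u' σA + c := by
  obtain ⟨b, hb⟩ := exists_mem_optActs u' σA
  exact (valStratGF_le_outB u σA b).trans (hb ▸ outB_le_outB_add h σA b)

lemma bddAbove_range_valStratGF (u : A → B → ℝ) :
    BddAbove (Set.range (valStratGF (B := B) u)) :=
  ⟨∑ a, |u a (Classical.arbitrary B)|, Set.forall_mem_range.2 fun σA =>
    (valStratGF_le_outB u σA _).trans (outB_le_sum_abs u σA _)⟩

lemma valStratGF_le_valGF (u : A → B → ℝ) (σA : FDist A) : valStratGF u σA ≤ valGF u :=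
  le_ciSup (bddAbove_range_valStratGF u) σA

variable [Nonempty A]

lemma valGF_le_valGF_add {u u' : A → B → ℝ} {c : ℝ} (h : ∀ a b, u a b ≤ u' a b + c) :
    valGF u ≤ valGF u' + c :=
  ciSup_le fun σA => (valStratGF_le_valStratGF_add h σA).trans
    (by gcongr; exact valStratGF_le_valGF u' σA)

lemma valGF_mono {u u' : A → B → ℝ} (h : ∀ a b, u a b ≤ u' a b) :
    valGF u ≤ valGF u' := by
  simpa using valGF_le_valGF_add (c := 0) (by simpa using h)

lemma valGF_nonneg {u : A → B → ℝ} (h : ∀ a b, 0 ≤ u a b) : 0 ≤ valGF u := by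
  obtain ⟨b, hb⟩ := exists_mem_optActs u (Classical.arbitrary (FDist A))
  exact (hb ▸ outB_nonneg h _ b).trans (valStratGF_le_valGF u _)

lemma valGF_le_one {u : A → B → ℝ} (h : ∀ a b, u a b ≤ 1) : valGF u ≤ 1 :=
  ciSup_le fun σA => (valStratGF_le_outB u σA (Classical.arbitrary B)).trans (outB_le_one h σA _)

end NormalForm

section Arena

variable {A B Q D : Type} [Fintype A] [Fintype Q]

lemma lift_le_lift_add (dist : D → FDist Q) {v v' : Q → ℝ} {c : ℝ}
    (h : ∀ q, v q ≤ v' q + c) (d : D) : lift dist v d ≤ lift dist v' d + c := by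
  calc lift dist v d ≤ ∑ q, (dist d).1 q * (v' q + c) :=
        Finset.sum_le_sum fun q _ => mul_le_mul_of_nonneg_left (h q) ((dist d).nonneg q)
    _ = lift dist v' d + c := by
        simp only [mul_add, Finset.sum_add_distrib, (dist d).sum_mul_const]; rfl

lemma lift_mono (dist : D → FDist Q) {v v' : Q → ℝ} (h : ∀ q, v q ≤ v' q) (d : D) :
    lift dist v d ≤ lift dist v' d := by
  simpa using lift_le_lift_add dist (c := 0) (by simpa using h) d

lemma lift_nonneg (dist : D → FDist Q) {v : Q → ℝ} (h : ∀ q, 0 ≤ v q) (d : D) :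
    0 ≤ lift dist v d :=
  Finset.sum_nonneg fun q _ => mul_nonneg ((dist d).nonneg q) (h q)

lemma lift_le_one (dist : D → FDist Q) {v : Q → ℝ} (h : ∀ q, v q ≤ 1) (d : D) :
    lift dist v d ≤ 1 :=
  (lift_mono dist (v' := fun _ => 1) h d).trans_eq ((dist d).sum_mul_const 1)

lemma outB_locPay_congr (δ : Q → A → B → D) (dist : D → FDist Q) {σA : FDist A} {b : B}
    {q : Q} {w w' : Q → ℝ}
    (h : ∀ a ∈ supp σA, ∀ q', (dist (δ q a b)).1 q' ≠ 0 → w q' = w' q') :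
    outB (locPay δ dist w q) σA b = outB (locPay δ dist w' q) σA b := by
  refine Finset.sum_congr rfl fun a _ => ?_
  by_cases ha : a ∈ supp σA
  · refine congrArg _ (Finset.sum_congr rfl fun q' _ => ?_)
    by_cases hq' : (dist (δ q a b)).1 q' = 0
    · rw [hq', zero_mul, zero_mul]
    · rw [h a ha q' hq']
  · rw [show σA.1 a = 0 from not_not.1 ha, zero_mul, zero_mul]

variable [Fintype B] (δ : Q → A → B → D) (dist : D → FDist Q)

lemma step_nonneg (σA : FDist A) (σB : FDist B) (q q' : Q) : 0 ≤ step δ dist σA σB q q' :=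
  Finset.sum_nonneg fun a _ => Finset.sum_nonneg fun b _ =>
    mul_nonneg (mul_nonneg (σA.nonneg a) (σB.nonneg b)) ((dist _).nonneg q')

lemma sum_step_mul (σA : FDist A) (σB : FDist B) (q : Q) (v : Q → ℝ) :
    ∑ q', step δ dist σA σB q q' * v q' = out (locPay δ dist v q) σA σB := by
  simp only [step, out, locPay, lift, Finset.sum_mul, Finset.mul_sum]
  rw [Finset.sum_comm]
  refine Finset.sum_congr rfl fun a _ => ?_
  rw [Finset.sum_comm]
  exact Finset.sum_congr rfl fun b _ => Finset.sum_congr rfl fun q' _ => by ring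

lemma sum_step_eq_one (σA : FDist A) (σB : FDist B) (q : Q) :
    ∑ q', step δ dist σA σB q q' = 1 := by
  simpa [out, locPay, lift, (dist _).sum_eq_one, ← Finset.mul_sum, ← Finset.sum_mul,
    σA.sum_eq_one, σB.sum_eq_one] using sum_step_mul δ dist σA σB q (fun _ => 1)

lemma sum_step_dirac_mul [DecidableEq B] (σA : FDist A) (b : B) (q : Q) (v : Q → ℝ) :
    ∑ q', step δ dist σA (dirac b) q q' * v q' = outB (locPay δ dist v q) σA b := by
  rw [sum_step_mul, out_dirac]

lemma step_dirac_ne_zero_iff [DecidableEq B] {σA : FDist A} {b : B} {q q' : Q} :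
    step δ dist σA (dirac b) q q' ≠ 0 ↔ ∃ a ∈ supp σA, (dist (δ q a b)).1 q' ≠ 0 := by
  have hstep : step δ dist σA (dirac b) q q' = ∑ a, σA.1 a * (dist (δ q a b)).1 q' := by
    refine Finset.sum_congr rfl fun a _ => ?_
    simp [dirac, mul_ite]
  rw [hstep, Ne, Finset.sum_eq_zero_iff_of_nonneg fun a _ =>
    mul_nonneg (σA.nonneg a) ((dist _).nonneg q')]
  simp [supp]

lemma exists_step_dirac_ne_zero_iff [DecidableEq B] {σA : FDist A} {b : B} {q : Q}
    {S : Set Q} : (∃ q' ∈ S, step δ dist σA (dirac b) q q' ≠ 0) ↔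
      ∃ a ∈ supp σA, δ q a b ∈ natS dist S := by
  simp only [step_dirac_ne_zero_iff, natS]
  aesop

end Arena

section Reach

variable {A B Q D : Type} [Fintype A] [Fintype B] [Fintype Q]
variable (δ : Q → A → B → D) (dist : D → FDist Q) (T : Q)

lemma reachSetNAux_append (S : Set Q) (n : ℕ) (sA : Strat Q A) (sB : Strat Q B) (π h : List Q)
    (q : Q) : reachSetNAux δ dist S n sA sB (π ++ h) q =
      reachSetNAux δ dist S n (residual sA π) (residual sB π) h q := by
  induction n generalizing h q with
  | zero => rfl
  | succ n ih =>
    simp only [reachSetNAux]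
    congr 1
    refine Finset.sum_congr rfl fun q' _ => ?_
    rw [List.append_assoc, ih]
    rfl

lemma reachN_zero (sA : Strat Q A) (sB : Strat Q B) (q : Q) :
    reachN δ dist T 0 sA sB q = if q = T then 1 else 0 := rfl

lemma reachN_target (n : ℕ) (sA : Strat Q A) (sB : Strat Q B) :
    reachN δ dist T n sA sB T = 1 := by
  cases n <;> simp [reachN, reachSetN, reachSetNAux]

lemma reachN_succ {q : Q} (hq : q ≠ T) (n : ℕ) (sA : Strat Q A) (sB : Strat Q B) :
    reachN δ dist T (n + 1) sA sB q = ∑ q', step δ dist (sA [] q) (sB [] q) q q' *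
      reachN δ dist T n (residual sA [q]) (residual sB [q]) q' := by
  simp only [reachN, reachSetN, reachSetNAux, Set.mem_singleton_iff, if_neg hq]
  exact Finset.sum_congr rfl fun q' _ =>
    congrArg _ (reachSetNAux_append δ dist _ n sA sB [q] [] q')

lemma reachN_mem_Icc (n : ℕ) (sA : Strat Q A) (sB : Strat Q B) (q : Q) :
    reachN δ dist T n sA sB q ∈ Set.Icc (0 : ℝ) 1 := by
  induction n generalizing sA sB q with
  | zero => rw [reachN_zero]; split_ifs <;> norm_num
  | succ n ih =>
    by_cases hq : q = T
    · subst hq; rw [reachN_target]; norm_num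
    rw [reachN_succ δ dist T hq]
    refine ⟨Finset.sum_nonneg fun q' _ =>
      mul_nonneg (step_nonneg δ dist _ _ _ _) (ih _ _ _).1, ?_⟩
    calc _ ≤ ∑ q', step δ dist (sA [] q) (sB [] q) q q' * 1 :=
          Finset.sum_le_sum fun q' _ =>
            mul_le_mul_of_nonneg_left (ih _ _ _).2 (step_nonneg δ dist _ _ _ _)
      _ = 1 := by simp [sum_step_eq_one]

lemma reachN_le_succ (n : ℕ) (sA : Strat Q A) (sB : Strat Q B) (q : Q) :
    reachN δ dist T n sA sB q ≤ reachN δ dist T (n + 1) sA sB q := by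
  induction n generalizing sA sB q with
  | zero =>
    by_cases hq : q = T
    · subst hq; simp [reachN_target]
    · rw [reachN_zero, if_neg hq]; exact (reachN_mem_Icc δ dist T _ _ _ _).1
  | succ n ih =>
    by_cases hq : q = T
    · subst hq; simp [reachN_target]
    rw [reachN_succ δ dist T hq, reachN_succ δ dist T hq]
    exact Finset.sum_le_sum fun q' _ =>
      mul_le_mul_of_nonneg_left (ih _ _ _) (step_nonneg δ dist _ _ _ _)

lemma tendsto_reachN (sA : Strat Q A) (sB : Strat Q B) (q : Q) :
    Filter.Tendsto (fun n => reachN δ dist T n sA sB q) Filter.atTop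
      (nhds (reach δ dist T sA sB q)) :=
  tendsto_atTop_ciSup (monotone_nat_of_le_succ fun n => reachN_le_succ δ dist T n sA sB q)
    ⟨1, Set.forall_mem_range.2 fun n => (reachN_mem_Icc δ dist T n sA sB q).2⟩

lemma reachN_le_reach (n : ℕ) (sA : Strat Q A) (sB : Strat Q B) (q : Q) :
    reachN δ dist T n sA sB q ≤ reach δ dist T sA sB q :=
  (monotone_nat_of_le_succ fun n => reachN_le_succ δ dist T n sA sB q).ge_of_tendsto
    (tendsto_reachN δ dist T sA sB q) n

lemma reach_mem_Icc (sA : Strat Q A) (sB : Strat Q B) (q : Q) :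
    reach δ dist T sA sB q ∈ Set.Icc (0 : ℝ) 1 :=
  ⟨(reachN_mem_Icc δ dist T 0 sA sB q).1.trans (reachN_le_reach δ dist T 0 sA sB q),
    ciSup_le fun n => (reachN_mem_Icc δ dist T n sA sB q).2⟩

lemma reach_target (sA : Strat Q A) (sB : Strat Q B) : reach δ dist T sA sB T = 1 :=
  le_antisymm (reach_mem_Icc δ dist T sA sB T).2
    ((reachN_target δ dist T 0 sA sB).symm.trans_le (reachN_le_reach δ dist T 0 sA sB T))

lemma reach_eq_sum_step {q : Q} (hq : q ≠ T) (sA : Strat Q A) (sB : Strat Q B) :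
    reach δ dist T sA sB q = ∑ q', step δ dist (sA [] q) (sB [] q) q q' *
      reach δ dist T (residual sA [q]) (residual sB [q]) q' := by
  refine tendsto_nhds_unique
    ((Filter.tendsto_add_atTop_iff_nat 1).2 (tendsto_reachN δ dist T sA sB q)) ?_
  simp only [reachN_succ δ dist T hq]
  exact tendsto_finsetSum _ fun q' _ => (tendsto_reachN δ dist T _ _ q').const_mul _

lemma reach_congr_right {sB sB' : Strat Q B} {q : Q} (h₀ : sB [] q = sB' [] q)
    (h : ∀ t x, sB (q :: t) x = sB' (q :: t) x) (sA : Strat Q A) :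
    reach δ dist T sA sB q = reach δ dist T sA sB' q := by
  have hres : residual sB [q] = residual sB' [q] := funext fun t => funext (h t)
  by_cases hq : q = T
  · subst hq; rw [reach_target, reach_target]
  rw [reach_eq_sum_step δ dist T hq, reach_eq_sum_step δ dist T hq, h₀, hres]

lemma reach_le_of_sum_step_le (sA : Strat Q A) (sB : Strat Q B) {w : Q → ℝ}
    (hw : ∀ q, 0 ≤ w q) (hwT : 1 ≤ w T)
    (hsafe : ∀ h q, q ≠ T → ∑ q', step δ dist (sA h q) (sB h q) q q' * w q' ≤ w q)
    (q : Q) : reach δ dist T sA sB q ≤ w q := by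
  suffices ∀ n sA sB, (∀ h q, q ≠ T →
      ∑ q', step δ dist (sA h q) (sB h q) q q' * w q' ≤ w q) →
      ∀ q, reachN δ dist T n sA sB q ≤ w q from
    ciSup_le fun n => this n sA sB hsafe q
  intro n
  induction n with
  | zero =>
    intro sA sB _ q
    rw [reachN_zero]
    split_ifs with hq
    · exact hq ▸ hwT
    · exact hw q
  | succ n ih =>
    intro sA sB hsafe q
    by_cases hq : q = T
    · subst hq; rw [reachN_target]; exact hwT
    rw [reachN_succ δ dist T hq]
    refine le_trans ?_ (hsafe [] q hq)
    exact Finset.sum_le_sum fun q' _ => mul_le_mul_of_nonneg_left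
      (ih _ _ (fun h x hx => hsafe (q :: h) x hx) q') (step_nonneg δ dist _ _ _ _)

lemma reach_eq_zero_of_invariant (P : Strat Q A → Strat Q B → Q → Prop)
    (hT : ∀ sA sB q, P sA sB q → q ≠ T)
    (hP : ∀ sA sB q q', P sA sB q → step δ dist (sA [] q) (sB [] q) q q' ≠ 0 →
      P (residual sA [q]) (residual sB [q]) q')
    {sA : Strat Q A} {sB : Strat Q B} {q : Q} (h : P sA sB q) :
    reach δ dist T sA sB q = 0 := by
  suffices ∀ n sA sB q, P sA sB q → reachN δ dist T n sA sB q = 0 from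
    le_antisymm (ciSup_le fun n => (this n sA sB q h).le) (reach_mem_Icc δ dist T sA sB q).1
  intro n
  induction n with
  | zero => intro sA sB q h; rw [reachN_zero, if_neg (hT sA sB q h)]
  | succ n ih =>
    intro sA sB q h
    rw [reachN_succ δ dist T (hT sA sB q h)]
    refine Finset.sum_eq_zero fun q' _ => ?_
    by_cases hs : step δ dist (sA [] q) (sB [] q) q q' = 0
    · rw [hs, zero_mul]
    · rw [ih _ _ _ (hP sA sB q q' h hs), mul_zero]

lemma valA_le_reach (sA : Strat Q A) (sB : Strat Q B) (q : Q) :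
    valA δ dist T sA q ≤ reach δ dist T sA sB q :=
  ciInf_le ⟨0, Set.forall_mem_range.2 fun sB => (reach_mem_Icc δ dist T sA sB q).1⟩ sB

variable [Nonempty B]

lemma le_valA {sA : Strat Q A} {q : Q} {c : ℝ} (h : ∀ sB, c ≤ reach δ dist T sA sB q) :
    c ≤ valA δ dist T sA q :=
  le_ciInf h

lemma valA_mem_Icc (sA : Strat Q A) (q : Q) : valA δ dist T sA q ∈ Set.Icc (0 : ℝ) 1 :=
  ⟨le_valA δ dist T fun sB => (reach_mem_Icc δ dist T sA sB q).1,
    (valA_le_reach δ dist T sA (Classical.arbitrary _) q).trans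
      (reach_mem_Icc δ dist T _ _ q).2⟩

lemma valA_target (sA : Strat Q A) : valA δ dist T sA T = 1 :=
  le_antisymm (valA_mem_Icc δ dist T sA T).2
    (le_valA δ dist T fun sB => (reach_target δ dist T sA sB).ge)

lemma valA_le_value (sA : Strat Q A) (q : Q) : valA δ dist T sA q ≤ value δ dist T q :=
  le_ciSup (f := fun sA => valA δ dist T sA q)
    ⟨1, Set.forall_mem_range.2 fun sA => (valA_mem_Icc δ dist T sA q).2⟩ sA

end Reach

namespace IsLfpDelta

variable {A B Q D : Type} [Fintype A] [Fintype B] [Fintype Q]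
variable {δ : Q → A → B → D} {dist : D → FDist Q} {T : Q} {m : Q → ℝ}

lemma nonneg (hm : IsLfpDelta δ dist T m) (q : Q) : 0 ≤ m q := (hm.1 q).1

lemma apply_target (hm : IsLfpDelta δ dist T m) : m T = 1 := by
  simpa [Δop] using (congrFun hm.2.1 T).symm

lemma valGF_locPay (hm : IsLfpDelta δ dist T m) {q : Q} (hq : q ≠ T) :
    valGF (locPay δ dist m q) = m q := by
  have h := congrFun hm.2.1 q
  rwa [Δop, if_neg hq] at h

lemma valStratGF_locPay_le [Nonempty B] (hm : IsLfpDelta δ dist T m) {q : Q} (hq : q ≠ T)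
    (σA : FDist A) : valStratGF (locPay δ dist m q) σA ≤ m q :=
  hm.valGF_locPay hq ▸ valStratGF_le_valGF _ σA

end IsLfpDelta

section Responses

variable {A B Q D : Type} [Fintype A] [Fintype B] [Fintype Q]

def respond (pick : Q → FDist A → B) (sA : Strat Q A) : Strat Q B :=
  fun h q => dirac (pick q (sA h q))

def startWith (σ : FDist B) (s : Strat Q B) : Strat Q B
  | [], _ => σ
  | _ :: h, x => s h x

variable (δ : Q → A → B → D) (dist : D → FDist Q) (T : Q) {m : Q → ℝ}

/-- Against optimal responses in the local games valued by `m`, `m` is a supermartingale. -/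
lemma reach_respond_le [Nonempty B] (hm : IsLfpDelta δ dist T m) {pick : Q → FDist A → B}
    (hpick : ∀ q σ, pick q σ ∈ optActs (locPay δ dist m q) σ) (sA : Strat Q A) (q : Q) :
    reach δ dist T sA (respond pick sA) q ≤ m q := by
  refine reach_le_of_sum_step_le δ dist T _ _ hm.nonneg hm.apply_target.ge (fun h x hx => ?_) q
  rw [respond, sum_step_dirac_mul, hpick x (sA h x)]
  exact hm.valStratGF_locPay_le hx _

lemma exists_forall_reach_le [Nonempty B] (hm : IsLfpDelta δ dist T m) (sA : Strat Q A) :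
    ∃ sB, ∀ q, reach δ dist T sA sB q ≤ m q := by
  choose pick hpick using fun q σ => exists_mem_optActs (locPay δ dist m q) σ
  exact ⟨respond pick sA, reach_respond_le δ dist T hm hpick sA⟩

lemma valA_le [Nonempty B] (hm : IsLfpDelta δ dist T m) (sA : Strat Q A) (q : Q) :
    valA δ dist T sA q ≤ m q := by
  obtain ⟨sB, hsB⟩ := exists_forall_reach_le δ dist T hm sA
  exact (valA_le_reach δ dist T sA sB q).trans (hsB q)

lemma value_le [Nonempty A] [Nonempty B] (hm : IsLfpDelta δ dist T m) (q : Q) :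
    value δ dist T q ≤ m q :=
  ciSup_le fun sA => valA_le δ dist T hm sA q

lemma valA_le_valStratGF_locPay [Nonempty B] (hm : IsLfpDelta δ dist T m) {q : Q} (hq : q ≠ T)
    (sA : Strat Q A) : valA δ dist T sA q ≤ valStratGF (locPay δ dist m q) (sA [] q) := by
  obtain ⟨b, hb⟩ := exists_mem_optActs (locPay δ dist m q) (sA [] q)
  obtain ⟨sB, hsB⟩ := exists_forall_reach_le δ dist T hm (residual sA [q])
  calc valA δ dist T sA q ≤ reach δ dist T sA (startWith (dirac b) sB) q :=
        valA_le_reach δ dist T _ _ q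
    _ ≤ ∑ q', step δ dist (sA [] q) (dirac b) q q' * m q' := by
        rw [reach_eq_sum_step δ dist T hq]
        exact Finset.sum_le_sum fun q' _ =>
          mul_le_mul_of_nonneg_left (hsB q') (step_nonneg δ dist _ _ _ _)
    _ = valStratGF (locPay δ dist m q) (sA [] q) := by rw [sum_step_dirac_mul, hb]

lemma mem_OptA_of_le_valA [Nonempty A] [Nonempty B] (hm : IsLfpDelta δ dist T m) {q : Q}
    (hq : q ≠ T) {sA : Strat Q A} (h : m q ≤ valA δ dist T sA q) :
    sA [] q ∈ OptA (locPay δ dist m q) := by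
  have := valA_le_valStratGF_locPay δ dist T hm hq sA
  change valStratGF _ _ = valGF _
  rw [hm.valGF_locPay hq]
  exact le_antisymm (hm.valStratGF_locPay_le hq _) (h.trans this)

/-- Player B exploits the non-optimal continuation at `q'` and answers optimally elsewhere. -/
lemma valA_lt_of_valA_residual_lt [Nonempty B] (hm : IsLfpDelta δ dist T m)
    {sA : Strat Q A} {q q' : Q} (hq : q ≠ T) {σB : FDist B}
    (hsafe : out (locPay δ dist m q) (sA [] q) σB ≤ m q)
    (hstep : step δ dist (sA [] q) σB q q' ≠ 0)
    (hlt : valA δ dist T (residual sA [q]) q' < m q') : valA δ dist T sA q < m q := by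
  obtain ⟨sB₁, h₁⟩ := exists_lt_of_ciInf_lt hlt
  obtain ⟨sB₂, h₂⟩ := exists_forall_reach_le δ dist T hm (residual sA [q])
  let sB : Strat Q B := fun t x => if t.headD x = q' then sB₁ t x else sB₂ t x
  have hbranch : ∀ x, reach δ dist T (residual sA [q]) sB x ≤ m x ∧
      (x = q' → reach δ dist T (residual sA [q]) sB x < m x) := by
    intro x
    by_cases hx : x = q'
    · subst hx
      rw [reach_congr_right δ dist T (sB' := sB₁) (by simp [sB]) (by simp [sB])]
      exact ⟨h₁.le, fun _ => h₁⟩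
    · rw [reach_congr_right δ dist T (sB' := sB₂) (by simp [sB, hx]) (by simp [sB, hx])]
      exact ⟨h₂ x, fun h => absurd h hx⟩
  calc valA δ dist T sA q ≤ reach δ dist T sA (startWith σB sB) q :=
        valA_le_reach δ dist T _ _ q
    _ < ∑ x, step δ dist (sA [] q) σB q x * m x := by
        rw [reach_eq_sum_step δ dist T hq]
        refine Finset.sum_lt_sum (fun x _ => mul_le_mul_of_nonneg_left (hbranch x).1
          (step_nonneg δ dist _ _ _ _)) ⟨q', Finset.mem_univ _, ?_⟩
        exact mul_lt_mul_of_pos_left ((hbranch q').2 rfl)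
          ((step_nonneg δ dist _ _ _ _).lt_of_ne' hstep)
    _ ≤ m q := by rwa [sum_step_mul]

end Responses

section Discounted

variable {A B Q D : Type} [Fintype A] [Fintype B] [Fintype Q]
variable (δ : Q → A → B → D) (dist : D → FDist Q) (T : Q)

def discountedΔop (lam : ℝ) (v : Q → ℝ) : Q → ℝ :=
  fun q => if q = T then 1 else lam * valGF (locPay δ dist v q)

lemma Δop_eq_discountedΔop_one : Δop δ dist T = discountedΔop δ dist T 1 := by
  funext v q
  simp only [Δop, discountedΔop, one_mul]
  rfl

lemma vseq_eq_iterate (n : ℕ) :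
    vseq δ dist T n = (discountedΔop δ dist T 1)^[n] (vseq δ dist T 0) := by
  induction n with
  | zero => rfl
  | succ n ih => rw [Function.iterate_succ_apply', ← ih, vseq, Δop_eq_discountedΔop_one]

variable [Nonempty A] [Nonempty B] {lam : ℝ}

lemma discountedΔop_mono (h0 : 0 ≤ lam) : Monotone (discountedΔop δ dist T lam) :=
  fun v v' h q => by
    unfold discountedΔop
    split_ifs
    · rfl
    · exact mul_le_mul_of_nonneg_left (valGF_mono fun a b => lift_mono dist h _) h0

lemma discountedΔop_add_const_le (h0 : 0 ≤ lam) (h1 : lam ≤ 1) (v : Q → ℝ) {c : ℝ}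
    (hc : 0 ≤ c) : discountedΔop δ dist T lam (v + fun _ => c) ≤
      discountedΔop δ dist T lam v + fun _ => c := fun q => by
  simp only [discountedΔop, Pi.add_apply]
  split_ifs
  · linarith
  · have := valGF_le_valGF_add (u := locPay δ dist (v + fun _ => c) q) (u' := locPay δ dist v q)
      fun a b => lift_le_lift_add dist (fun q => le_refl (v q + c)) _
    nlinarith

lemma discountedΔop_mem_Icc (h0 : 0 ≤ lam) (h1 : lam ≤ 1) {v : Q → ℝ}
    (hv : ∀ q, v q ∈ Set.Icc (0 : ℝ) 1) (q : Q) :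
    discountedΔop δ dist T lam v q ∈ Set.Icc (0 : ℝ) 1 := by
  unfold discountedΔop
  split_ifs
  · norm_num
  · have h0' := valGF_nonneg (u := locPay δ dist v q) fun a b =>
      lift_nonneg dist (fun q => (hv q).1) (δ q a b)
    have h1' := valGF_le_one (u := locPay δ dist v q) fun a b =>
      lift_le_one dist (fun q => (hv q).2) (δ q a b)
    exact ⟨mul_nonneg h0 h0', by nlinarith⟩

lemma discountedΔop_one_sub_le (h1 : lam ≤ 1) {v : Q → ℝ} (hv : ∀ q, v q ≤ 1) (q : Q) :
    discountedΔop δ dist T 1 v q - (1 - lam) ≤ discountedΔop δ dist T lam v q := by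
  unfold discountedΔop
  split_ifs
  · linarith
  · have := valGF_le_one (u := locPay δ dist v q) fun a b => lift_le_one dist hv (δ q a b)
    nlinarith

lemma vseq_zero_le_discountedΔop (h0 : 0 ≤ lam) :
    vseq δ dist T 0 ≤ discountedΔop δ dist T lam (vseq δ dist T 0) := fun q => by
  simp only [vseq, discountedΔop]
  split_ifs
  · rfl
  · exact mul_nonneg h0 (valGF_nonneg fun a b => lift_nonneg dist (fun q => by
      split_ifs <;> norm_num) _)

lemma iterate_discountedΔop_mem_Icc (h0 : 0 ≤ lam) (h1 : lam ≤ 1) (n : ℕ) (q : Q) :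
    (discountedΔop δ dist T lam)^[n] (vseq δ dist T 0) q ∈ Set.Icc (0 : ℝ) 1 := by
  induction n generalizing q with
  | zero => simp only [Function.iterate_zero, id, vseq]; split_ifs <;> norm_num
  | succ n ih =>
    rw [Function.iterate_succ_apply']
    exact discountedΔop_mem_Icc δ dist T h0 h1 ih q

lemma vseq_le_discountedΔop_iterate_add (h0 : 0 ≤ lam) (h1 : lam ≤ 1) (n : ℕ) (q : Q) :
    vseq δ dist T n q ≤
      (discountedΔop δ dist T lam)^[n] (vseq δ dist T 0) q + n * (1 - lam) := by
  induction n generalizing q with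
  | zero => simp
  | succ n ih =>
    rw [vseq_eq_iterate, Function.iterate_succ_apply', ← vseq_eq_iterate,
      Function.iterate_succ_apply']
    set y := (discountedΔop δ dist T lam)^[n] (vseq δ dist T 0)
    have hc : 0 ≤ n * (1 - lam) := mul_nonneg n.cast_nonneg (by linarith)
    have h₁ := discountedΔop_mono δ dist T zero_le_one (b := y + fun _ => n * (1 - lam))
      (fun q => ih q) q
    have h₂ := discountedΔop_add_const_le δ dist T zero_le_one le_rfl y hc q
    have h₃ := discountedΔop_one_sub_le δ dist T h1
      (fun q => (iterate_discountedΔop_mem_Icc δ dist T h0 h1 n q).2) q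
    simp only [Pi.add_apply] at h₂
    push_cast
    linarith

lemma vseq_mem_Icc (n : ℕ) (q : Q) : vseq δ dist T n q ∈ Set.Icc (0 : ℝ) 1 := by
  rw [vseq_eq_iterate]
  exact iterate_discountedΔop_mem_Icc δ dist T zero_le_one le_rfl n q

lemma monotone_vseq (q : Q) : Monotone fun n => vseq δ dist T n q := fun n n' h => by
  change vseq δ dist T n q ≤ vseq δ dist T n' q
  rw [vseq_eq_iterate δ dist T n, vseq_eq_iterate δ dist T n']
  exact ((discountedΔop_mono δ dist T zero_le_one).monotone_iterate_of_le_map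
    (vseq_zero_le_discountedΔop δ dist T zero_le_one) h) q

variable {m : Q → ℝ}

lemma le_iSup_vseq (hm : IsLfpDelta δ dist T m) (q : Q) : m q ≤ ⨆ n, vseq δ dist T n q := by
  have hfix := iSup_iterate_isFixedPt (discountedΔop_mono δ dist T zero_le_one)
    (fun v c hc => discountedΔop_add_const_le δ dist T zero_le_one le_rfl v hc)
    (vseq_zero_le_discountedΔop δ dist T zero_le_one) (fun n q => by
      rw [← vseq_eq_iterate]; exact (vseq_mem_Icc δ dist T n q).2)
  simp only [← vseq_eq_iterate] at hfix
  rw [← Δop_eq_discountedΔop_one] at hfix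
  refine hm.2.2 _ (fun q => ⟨?_, ciSup_le fun n => (vseq_mem_Icc δ dist T n q).2⟩) hfix q
  exact (vseq_mem_Icc δ dist T 0 q).1.trans
    (le_ciSup ⟨1, Set.forall_mem_range.2 fun n => (vseq_mem_Icc δ dist T n q).2⟩ 0)

lemma iterate_discountedΔop_le (hm : IsLfpDelta δ dist T m) (h0 : 0 ≤ lam) (h1 : lam ≤ 1)
    (n : ℕ) (q : Q) : (discountedΔop δ dist T lam)^[n] (vseq δ dist T 0) q ≤ m q := by
  induction n generalizing q with
  | zero =>
    simp only [Function.iterate_zero, id, vseq]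
    split_ifs with hq
    · rw [hq, hm.apply_target]
    · exact hm.nonneg q
  | succ n ih =>
    rw [Function.iterate_succ_apply']
    refine (discountedΔop_mono δ dist T h0 ih q).trans ?_
    unfold discountedΔop
    split_ifs with hq
    · rw [hq, hm.apply_target]
    · rw [hm.valGF_locPay hq]
      exact mul_le_of_le_one_left (hm.nonneg q) h1

/-- `v` is the value of the game discounted by a factor close to `1`. -/
lemma exists_approx_strictly_improvable (hm : IsLfpDelta δ dist T m) {ε : ℝ} (hε : 0 < ε) :
    ∃ v : Q → ℝ, (∀ q, v q ≤ m q) ∧ (∀ q, m q - ε ≤ v q) ∧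
      ∀ q, q ≠ T → 0 < v q → v q < valGF (locPay δ dist v q) := by
  obtain ⟨N, hN⟩ := exists_iSup_le_add (monotone_vseq δ dist T)
    (fun n q => (vseq_mem_Icc δ dist T n q).2) (half_pos hε)
  obtain ⟨t, ht, hNt⟩ := exists_pos_mul_lt (half_pos hε) (N : ℝ)
  set lam := 1 - min t (1 / 2)
  have hlam0 : 0 ≤ lam := by have := min_le_right t (1 / 2); linarith
  have hlam1 : lam < 1 := by have := lt_min ht one_half_pos; linarith
  have hlamN : N * (1 - lam) ≤ ε / 2 := by
    have : N * (1 - lam) ≤ N * t :=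
      mul_le_mul_of_nonneg_left (by simp [lam]) N.cast_nonneg
    linarith
  set F := discountedΔop δ dist T lam
  have hbdd := iterate_discountedΔop_mem_Icc δ dist T hlam0 hlam1.le
  have hfix := iSup_iterate_isFixedPt (discountedΔop_mono δ dist T hlam0)
    (fun v c hc => discountedΔop_add_const_le δ dist T hlam0 hlam1.le v hc)
    (vseq_zero_le_discountedΔop δ dist T hlam0) (fun n q => (hbdd n q).2)
  set v := fun q => ⨆ n, F^[n] (vseq δ dist T 0) q
  refine ⟨v, fun q => ciSup_le fun n => iterate_discountedΔop_le δ dist T hm hlam0 hlam1.le n q,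
    fun q => ?_, fun q hq hpos => ?_⟩
  · calc m q - ε ≤ vseq δ dist T N q - N * (1 - lam) := by
          linarith [le_iSup_vseq δ dist T hm q, hN q]
      _ ≤ F^[N] (vseq δ dist T 0) q := by
          linarith [vseq_le_discountedΔop_iterate_add δ dist T hlam0 hlam1.le N q]
      _ ≤ v q := le_ciSup ⟨1, Set.forall_mem_range.2 fun n => (hbdd n q).2⟩ N
  · have hvq : lam * valGF (locPay δ dist v q) = v q := by
      simpa [F, discountedΔop, hq] using congrFun hfix q
    have hval : 0 < valGF (locPay δ dist v q) := by
      by_contra! h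
      nlinarith
    nlinarith

end Discounted

section Secure

variable {A B Q D : Type} [Fintype A] [Fintype B] [Fintype Q]
variable (δ : Q → A → B → D) (dist : D → FDist Q) (m : Q → ℝ) (T : Q)

lemma natS_mono {S S' : Set Q} (h : S ⊆ S') : natS dist S ⊆ natS dist S' :=
  fun _ ⟨q, hq, hd⟩ => ⟨q, h hq, hd⟩

lemma Eff_mono {q : Q} {Gd Gd' Bd Bd' : Set Q} (hG : Gd ⊆ Gd') (hB : Bd' ⊆ Bd) :
    Eff δ dist m q Gd Bd ⊆ Eff δ dist m q Gd' Bd' := by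
  rintro σ ⟨⟨hopt, hprog⟩, hrisk⟩
  refine ⟨⟨hopt, fun b hb => ?_⟩,
    fun ⟨_, b, hb, a, ha, hd⟩ => hrisk ⟨hopt, b, hb, a, ha, ?_⟩⟩
  · obtain ⟨a, ha, hd⟩ := hprog b hb
    exact ⟨a, ha, natS_mono dist hG hd⟩
  · exact natS_mono dist hB hd

lemma monotone_SecN (Bd : Set Q) : Monotone (SecN δ dist m T Bd) :=
  monotone_nat_of_le_succ fun _ => Set.subset_union_left

lemma SecN_anti {Bd Bd' : Set Q} (h : Bd ⊆ Bd') (n : ℕ) :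
    SecN δ dist m T Bd' n ⊆ SecN δ dist m T Bd n := by
  induction n with
  | zero => exact le_rfl
  | succ n ih =>
    rintro q (hq | ⟨hq, σ, hσ⟩)
    · exact Or.inl (ih hq)
    · exact Or.inr ⟨fun hb => hq (h hb), σ, Eff_mono δ dist m ih h hσ⟩

lemma Sec_anti {Bd Bd' : Set Q} (h : Bd ⊆ Bd') : Sec δ dist m T Bd' ⊆ Sec δ dist m T Bd :=
  Set.union_subset_union_left _ (Set.iUnion_mono fun n => SecN_anti δ dist m T h n)

lemma monotone_BadN : Monotone (BadN δ dist m T) := by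
  refine monotone_nat_of_le_succ fun n => ?_
  induction n with
  | zero => exact Set.empty_subset _
  | succ n ih => exact Set.compl_subset_compl.2 (Sec_anti δ dist m T ih)

lemma target_mem_Sec (Bd : Set Q) : T ∈ Sec δ dist m T Bd :=
  Or.inl (Set.mem_iUnion.2 ⟨0, rfl⟩)

lemma target_notMem_BadN (n : ℕ) : T ∉ BadN δ dist m T n := by
  cases n with
  | zero => exact id
  | succ n => exact not_not.2 (target_mem_Sec δ dist m T _)

lemma ne_target_of_eq_zero_or_notMem_Sec (hm : IsLfpDelta δ dist T m) {Bd : Set Q} {q : Q}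
    (hq : m q = 0 ∨ q ∉ Sec δ dist m T Bd) : q ≠ T := by
  intro h
  rw [h] at hq
  rcases hq with h | h
  · linarith [hm.apply_target]
  · exact h (target_mem_Sec δ dist m T Bd)

lemma Sec_Bad : Sec δ dist m T (Bad δ dist m T) = (Bad δ dist m T)ᶜ := by
  have := eq_apply_card_of_card_le (fun Bd => (Sec δ dist m T Bd)ᶜ) (fun _ => rfl)
    (monotone_BadN δ dist m T) (Nat.le_succ _)
  exact (compl_compl _).symm.trans (congrArg compl this)

lemma iUnion_SecN (Bd : Set Q) :
    ⋃ n, SecN δ dist m T Bd n = SecN δ dist m T Bd (Fintype.card Q) := by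
  refine subset_antisymm (Set.iUnion_subset fun n => ?_) (Set.subset_iUnion _ _)
  rw [← eq_apply_card_of_card_le
    (fun S => S ∪ {q | q ∉ Bd ∧ (Eff δ dist m q S Bd).Nonempty}) (fun _ => rfl)
    (monotone_SecN δ dist m T Bd)
    (le_max_right n _)]
  exact monotone_SecN δ dist m T Bd (le_max_left _ _)

lemma mem_Sec_of_mem_Eff {Bd : Set Q} {q : Q} (hq : q ∉ Bd) {σ : FDist A}
    (hσ : σ ∈ Eff δ dist m q (⋃ n, SecN δ dist m T Bd n) Bd) :
    q ∈ Sec δ dist m T Bd := by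
  rw [iUnion_SecN] at hσ
  exact Or.inl (Set.mem_iUnion.2 ⟨Fintype.card Q + 1, Or.inr ⟨hq, σ, hσ⟩⟩)

/-- Junk value `0` for a state that is secure at no stage. -/
def secRank (Bd : Set Q) (q : Q) : ℕ := sInf {n | q ∈ SecN δ dist m T Bd n}

lemma secRank_le {Bd : Set Q} {q : Q} {n : ℕ} (h : q ∈ SecN δ dist m T Bd n) :
    secRank δ dist m T Bd q ≤ n :=
  Nat.sInf_le h

lemma nonempty_Eff_secRank_lt {Bd : Set Q} {q : Q} {n : ℕ} (h : q ∈ SecN δ dist m T Bd n)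
    (hq : q ≠ T) :
    (Eff δ dist m q {q' | secRank δ dist m T Bd q' < secRank δ dist m T Bd q} Bd).Nonempty := by
  have hmem : q ∈ SecN δ dist m T Bd (secRank δ dist m T Bd q) :=
    Nat.sInf_mem (s := {n | q ∈ SecN δ dist m T Bd n}) ⟨n, h⟩
  obtain ⟨k, hk⟩ : ∃ k, secRank δ dist m T Bd q = k + 1 :=
    Nat.exists_eq_succ_of_ne_zero fun h0 => hq (by rw [h0] at hmem; exact hmem)
  rw [hk] at hmem
  rcases hmem with hmem | ⟨-, σ, hσ⟩
  · exact absurd hmem (Nat.notMem_of_lt_sInf (s := {n | q ∈ SecN δ dist m T Bd n})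
      (by unfold secRank at hk; omega))
  · exact ⟨σ, Eff_mono δ dist m (fun q' hq' => by
      simpa [hk, Nat.lt_succ_iff] using secRank_le δ dist m T hq') le_rfl hσ⟩

lemma exists_forall_mem_Eff_secRank_lt [Nonempty A] (Bd : Set Q) :
    ∃ σ : Q → FDist A, ∀ q n, q ∈ SecN δ dist m T Bd n → q ≠ T →
      σ q ∈ Eff δ dist m q {q' | secRank δ dist m T Bd q' < secRank δ dist m T Bd q} Bd := by
  choose σ hσ using fun q => show ∃ σ, ∀ n, q ∈ SecN δ dist m T Bd n → q ≠ T →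
      σ ∈ Eff δ dist m q {q' | secRank δ dist m T Bd q' < secRank δ dist m T Bd q} Bd by
    by_cases h : ∃ n, q ∈ SecN δ dist m T Bd n ∧ q ≠ T
    · obtain ⟨n, hn, hq⟩ := h
      obtain ⟨σ, hσ⟩ := nonempty_Eff_secRank_lt δ dist m T hn hq
      exact ⟨σ, fun _ _ _ => hσ⟩
    · exact ⟨Classical.arbitrary _, fun n hn hq => absurd ⟨n, hn, hq⟩ h⟩
  exact ⟨σ, hσ⟩

lemma exists_mem_SecN_Bad {q : Q} (hq : q ∉ Bad δ dist m T) (hm0 : m q ≠ 0) :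
    ∃ n, q ∈ SecN δ dist m T (Bad δ dist m T) n := by
  rw [← Set.mem_compl_iff, ← Sec_Bad] at hq
  rcases hq with h | h
  · exact Set.mem_iUnion.1 h
  · exact absurd h hm0

end Secure

section Positional

variable {A B Q D : Type} [Fintype A] [Fintype B] [Fintype Q]
variable (δ : Q → A → B → D) (dist : D → FDist Q) (T : Q)

lemma valStratGF_locPay_valA_le [Nonempty B] (σ : Q → FDist A) {q : Q} (hq : q ≠ T) :
    valStratGF (locPay δ dist (valA δ dist T (ofPos σ)) q) (σ q) ≤
      valA δ dist T (ofPos σ) q := by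
  refine le_valA δ dist T fun sB => ?_
  rw [reach_eq_sum_step δ dist T hq]
  calc valStratGF (locPay δ dist (valA δ dist T (ofPos σ)) q) (σ q)
      ≤ out (locPay δ dist (valA δ dist T (ofPos σ)) q) (σ q) (sB [] q) :=
        valStratGF_le_out _ _ _
    _ = ∑ q', step δ dist (σ q) (sB [] q) q q' * valA δ dist T (ofPos σ) q' :=
        (sum_step_mul δ dist _ _ q _).symm
    _ ≤ _ := Finset.sum_le_sum fun q' _ => mul_le_mul_of_nonneg_left
        (valA_le_reach δ dist T _ _ q') (step_nonneg δ dist _ _ _ _)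

/-- Among the states where `w - val(σ)` is maximal and positive, one of minimal rank would
contradict the one-step inequality `valStratGF_locPay_valA_le`. -/
lemma le_valA_ofPos [Nonempty B] (σ : Q → FDist A) {w : Q → ℝ} (rank : Q → ℕ)
    (hwT : w T ≤ 1)
    (hloc : ∀ q, q ≠ T → 0 < w q → ∀ b, w q ≤ outB (locPay δ dist w q) (σ q) b ∧
      (w q < outB (locPay δ dist w q) (σ q) b ∨
        ∃ a ∈ supp (σ q), δ q a b ∈ natS dist {q' | rank q' < rank q}))
    (q : Q) : w q ≤ valA δ dist T (ofPos σ) q := by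
  set f := valA δ dist T (ofPos σ)
  by_contra! hlt
  have : Nonempty Q := ⟨q⟩
  obtain ⟨q₁, hq₁⟩ := Finite.exists_max fun q => w q - f q
  set d := w q₁ - f q₁
  obtain ⟨q₀, hq₀, hmin⟩ :=
    Finset.exists_min_image (Finset.univ.filter fun q => w q - f q = d) rank ⟨q₁, by simp [d]⟩
  simp only [Finset.mem_filter, Finset.mem_univ, true_and] at hq₀ hmin
  have hd : 0 < d := by linarith [hq₁ q]
  have hq₀T : q₀ ≠ T := fun h => by
    have : f T = 1 := valA_target δ dist T _
    subst h
    linarith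
  obtain ⟨b, hb⟩ := exists_mem_optActs (locPay δ dist f q₀) (σ q₀)
  have hf : outB (locPay δ dist f q₀) (σ q₀) b ≤ f q₀ :=
    hb ▸ valStratGF_locPay_valA_le δ dist T σ hq₀T
  obtain ⟨hle, hcase⟩ :=
    hloc q₀ hq₀T (by linarith [(valA_mem_Icc δ dist T (ofPos σ) q₀).1]) b
  have hsum : ∑ q', step δ dist (σ q₀) (dirac b) q₀ q' * (w q' - f q') =
      outB (locPay δ dist w q₀) (σ q₀) b - outB (locPay δ dist f q₀) (σ q₀) b := by
    simp only [mul_sub, Finset.sum_sub_distrib, sum_step_dirac_mul]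
  rcases hcase with hlt' | ⟨a, ha, hprog⟩
  · have : ∑ q', step δ dist (σ q₀) (dirac b) q₀ q' * (w q' - f q') ≤ d :=
      calc _ ≤ ∑ q', step δ dist (σ q₀) (dirac b) q₀ q' * d :=
            Finset.sum_le_sum fun q' _ =>
              mul_le_mul_of_nonneg_left (hq₁ q') (step_nonneg δ dist _ _ _ _)
        _ = d := by rw [← Finset.sum_mul, sum_step_eq_one, one_mul]
    linarith
  · obtain ⟨q', hq', hstep⟩ := (exists_step_dirac_ne_zero_iff δ dist).2 ⟨a, ha, hprog⟩
    have := eq_of_le_sum_mul (step_nonneg δ dist _ _ _) (sum_step_eq_one δ dist _ _ _) hq₁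
      (by linarith) hstep
    exact absurd (hmin q' this) (not_le.2 hq')

lemma exists_forall_lt_valStratGF [Nonempty A] [Nonempty B] {v : Q → ℝ}
    (hv : ∀ q, q ≠ T → 0 < v q → v q < valGF (locPay δ dist v q)) :
    ∃ σ : Q → FDist A, ∀ q, q ≠ T → 0 < v q →
      v q < valStratGF (locPay δ dist v q) (σ q) := by
  choose σ hσ using fun q => show ∃ σ, q ≠ T → 0 < v q →
      v q < valStratGF (locPay δ dist v q) σ by
    by_cases h : q ≠ T ∧ 0 < v q
    · obtain ⟨σ, hσ⟩ := exists_lt_valStratGF (hv q h.1 h.2)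
      exact ⟨σ, fun _ _ => hσ⟩
    · exact ⟨Classical.arbitrary _, fun hq hpos => absurd ⟨hq, hpos⟩ h⟩
  exact ⟨σ, hσ⟩

variable {m : Q → ℝ}

lemma le_outB_of_mem_Eff [Nonempty A] [Nonempty B] (hm : IsLfpDelta δ dist T m) {Bd L : Set Q}
    {q : Q} (hq : q ≠ T) {σ : FDist A} (hσ : σ ∈ Eff δ dist m q L Bd) {w : Q → ℝ}
    (hw : ∀ q', q' ∉ Bd → w q' = m q') {ε η : ℝ} (hwm : ∀ q', m q' - ε ≤ w q')
    (hεη : ε < η)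
    (hη : ∀ b, b ∉ optActs (locPay δ dist m q) σ →
      valStratGF (locPay δ dist m q) σ + η ≤ outB (locPay δ dist m q) σ b) (b : B) :
    m q ≤ outB (locPay δ dist w q) σ b ∧
      (m q < outB (locPay δ dist w q) σ b ∨ ∃ a ∈ supp σ, δ q a b ∈ natS dist L) := by
  have hval : valStratGF (locPay δ dist m q) σ = m q := hσ.1.1.trans (hm.valGF_locPay hq)
  by_cases hb : b ∈ optActs (locPay δ dist m q) σ
  · have heq : outB (locPay δ dist w q) σ b = outB (locPay δ dist m q) σ b :=
      outB_locPay_congr δ dist fun a ha q' hq' => hw q' fun hq'Bd =>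
        hσ.2 ⟨hσ.1.1, b, hb, a, ha, q', hq'Bd, hq'⟩
    rw [heq, hb, hval]
    exact ⟨le_rfl, Or.inr (hσ.1.2 b hb)⟩
  · have := hη b hb
    have := outB_le_outB_add (u := locPay δ dist m q) (u' := locPay δ dist w q) (c := ε)
      (fun a b => lift_le_lift_add dist (fun q' => by linarith [hwm q']) (δ q a b)) σ b
    exact ⟨by linarith, Or.inl (by linarith)⟩

end Positional

section Construction

variable {A B Q D : Type} [Fintype A] [Fintype B] [Fintype Q] [Nonempty A] [Nonempty B]
variable (δ : Q → A → B → D) (dist : D → FDist Q) (T : Q) {m : Q → ℝ}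

theorem exists_ofPos_optimal_off_Bad (hm : IsLfpDelta δ dist T m) {ε : ℝ} (hε : 0 < ε) :
    ∃ σ : Q → FDist A, (∀ q, m q - ε ≤ valA δ dist T (ofPos σ) q) ∧
      ∀ q, q ∉ Bad δ dist m T → m q ≤ valA δ dist T (ofPos σ) q := by
  set Bd := Bad δ dist m T
  obtain ⟨σF, hσF⟩ := exists_forall_mem_Eff_secRank_lt δ dist m T Bd
  obtain ⟨η, hη, hηle⟩ := exists_pos_le_of_pos fun p : Q × B =>
    outB (locPay δ dist m p.1) (σF p.1) p.2 - valStratGF (locPay δ dist m p.1) (σF p.1)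
  obtain ⟨ε', hε', hε'ε, hε'η⟩ : ∃ ε', 0 < ε' ∧ ε' ≤ ε ∧ ε' < η :=
    ⟨min ε η / 2, half_pos (lt_min hε hη), by linarith [min_le_left ε η],
      by linarith [min_le_right ε η]⟩
  obtain ⟨v, hvm, hmv, hv⟩ := exists_approx_strictly_improvable δ dist T hm hε'
  obtain ⟨σD, hσD⟩ := exists_forall_lt_valStratGF δ dist T hv
  set σ : Q → FDist A := fun q => if q ∈ Bd then σD q else σF q
  set w : Q → ℝ := fun q => if q ∈ Bd then v q else m q
  have hvw : ∀ q, v q ≤ w q := fun q => by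
    simp only [w]; split_ifs
    exacts [le_rfl, hvm q]
  have hwm : ∀ q, m q - ε' ≤ w q := fun q => by
    simp only [w]; split_ifs
    exacts [hmv q, by linarith]
  have hw : ∀ q, w q ≤ valA δ dist T (ofPos σ) q := by
    refine le_valA_ofPos δ dist T σ (secRank δ dist m T Bd) ?_ fun q hq hpos b => ?_
    · simp [w, target_notMem_BadN, hm.apply_target, Bd, Bad]
    by_cases hqBd : q ∈ Bd
    · have hwq : w q = v q := if_pos hqBd
      rw [show σ q = σD q from if_pos hqBd, hwq]
      rw [hwq] at hpos
      have := (hσD q hq hpos).trans_le (valStratGF_le_outB _ _ b)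
      have := outB_mono (u := locPay δ dist v q) (u' := locPay δ dist w q)
        (fun a b => lift_mono dist hvw (δ q a b)) (σD q) b
      exact ⟨by linarith, Or.inl (by linarith)⟩
    · have hwq : w q = m q := if_neg hqBd
      obtain ⟨n, hn⟩ := exists_mem_SecN_Bad δ dist m T hqBd (hwq ▸ hpos).ne'
      rw [show σ q = σF q from if_neg hqBd, hwq]
      refine le_outB_of_mem_Eff δ dist T hm hq (hσF q n hn hq) (fun q' hq' => if_neg hq')
        hwm hε'η (fun b hb => ?_) b
      have := hηle (q, b) (sub_pos.2 ((valStratGF_le_outB _ _ b).lt_of_ne (Ne.symm hb)))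
      linarith
  refine ⟨σ, fun q => ?_, fun q hq => ?_⟩
  · linarith [hwm q, hw q]
  · simpa [w, hq] using hw q

end Construction

section Spoiler

variable {A B Q D : Type} [Fintype A] [Fintype B] [Fintype Q] [Nonempty B]
variable (δ : Q → A → B → D) (dist : D → FDist Q)

lemma exists_spoiling_act (m : Q → ℝ) (q : Q) (S Bd : Set Q) (σ : FDist A) :
    ∃ b ∈ optActs (locPay δ dist m q) σ, σ ∈ OptA (locPay δ dist m q) →
      σ ∉ Eff δ dist m q S Bd →
        (∃ a ∈ supp σ, δ q a b ∈ natS dist Bd) ∨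
          ∀ a ∈ supp σ, δ q a b ∉ natS dist S := by
  by_cases hrisk : σ ∈ Risk δ dist m q Bd
  · obtain ⟨-, b, hb, a, ha, hd⟩ := hrisk
    exact ⟨b, hb, fun _ _ => Or.inl ⟨a, ha, hd⟩⟩
  by_cases hprog : σ ∈ OptA (locPay δ dist m q) ∧ σ ∉ Prog δ dist m q S
  · obtain ⟨b, hb, hno⟩ : ∃ b ∈ optActs (locPay δ dist m q) σ,
        ∀ a ∈ supp σ, δ q a b ∉ natS dist S := by
      by_contra! h
      exact hprog.2 ⟨hprog.1, h⟩
    exact ⟨b, hb, fun _ _ => Or.inr hno⟩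
  · obtain ⟨b, hb⟩ := exists_mem_optActs (locPay δ dist m q) σ
    exact ⟨b, hb, fun hopt hEff => absurd ⟨not_and_not_right.1 hprog hopt, hrisk⟩ hEff⟩

variable [Nonempty A] (T : Q) {m : Q → ℝ}

lemma spoiling_step (hm : IsLfpDelta δ dist T m) {Bd : Set Q}
    (ih : ∀ q ∈ Bd, ∀ sA, valA δ dist T sA q < m q) {pick : Q → FDist A → B}
    (hpick : ∀ q σ, pick q σ ∈ optActs (locPay δ dist m q) σ ∧
      (σ ∈ OptA (locPay δ dist m q) →
        σ ∉ Eff δ dist m q (⋃ k, SecN δ dist m T Bd k) Bd →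
        (∃ a ∈ supp σ, δ q a (pick q σ) ∈ natS dist Bd) ∨
          ∀ a ∈ supp σ, δ q a (pick q σ) ∉ natS dist (⋃ k, SecN δ dist m T Bd k)))
    {sA : Strat Q A} {q q' : Q} (hq : m q = 0 ∨ q ∉ Sec δ dist m T Bd)
    (hopt : m q ≤ valA δ dist T sA q)
    (hstep : step δ dist (sA [] q) (dirac (pick q (sA [] q))) q q' ≠ 0) :
    m q' ≤ valA δ dist T (residual sA [q]) q' ∧ (m q' = 0 ∨ q' ∉ Sec δ dist m T Bd) := by
  set σ := sA [] q
  set b := pick q σ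
  have hqT := ne_target_of_eq_zero_or_notMem_Sec δ dist m T hm hq
  have hsafe : outB (locPay δ dist m q) σ b ≤ m q :=
    (hpick q σ).1.trans_le (hm.valStratGF_locPay_le hqT σ)
  have hcont : ∀ x, step δ dist σ (dirac b) q x ≠ 0 →
      m x ≤ valA δ dist T (residual sA [q]) x :=
    fun x hx => not_lt.1 fun hlt => (valA_lt_of_valA_residual_lt δ dist T hm hqT
      (by rwa [out_dirac]) hx hlt).not_ge hopt
  refine ⟨hcont q' hstep, ?_⟩
  rcases hq with h0 | hBad
  · have hsum : ∑ x, step δ dist σ (dirac b) q x * m x = 0 :=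
      le_antisymm (by rw [sum_step_dirac_mul]; linarith)
        (Finset.sum_nonneg fun x _ => mul_nonneg (step_nonneg δ dist _ _ _ _) (hm.nonneg x))
    have := (Finset.sum_eq_zero_iff_of_nonneg fun x _ =>
      mul_nonneg (step_nonneg δ dist σ (dirac b) q x) (hm.nonneg x)).1 hsum q' (Finset.mem_univ _)
    exact Or.inl ((mul_eq_zero.1 this).resolve_left hstep)
  refine or_iff_not_imp_left.2 fun hm0 hq'Sec => ?_
  rcases hq'Sec with hq'S | hq'0
  · have hqBd : q ∉ Bd := fun h => (ih q h sA).not_ge hopt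
    have hEff : σ ∉ Eff δ dist m q (⋃ k, SecN δ dist m T Bd k) Bd :=
      fun h => hBad (mem_Sec_of_mem_Eff δ dist m T hqBd h)
    rcases (hpick q σ).2 (mem_OptA_of_le_valA δ dist T hm hqT hopt) hEff with hrisk | havoid
    · obtain ⟨x, hxBd, hx⟩ := (exists_step_dirac_ne_zero_iff δ dist).2 hrisk
      exact (ih x hxBd _).not_ge (hcont x hx)
    · obtain ⟨a, ha, hd⟩ := (exists_step_dirac_ne_zero_iff δ dist).1 ⟨q', hq'S, hstep⟩
      exact havoid a ha hd
  · exact hm0 hq'0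

theorem valA_lt_of_mem_BadN (hm : IsLfpDelta δ dist T m) (n : ℕ) :
    ∀ q ∈ BadN δ dist m T n, ∀ sA, valA δ dist T sA q < m q := by
  induction n with
  | zero => exact fun q hq => absurd hq (Set.notMem_empty q)
  | succ n ih =>
    intro q hq sA
    by_contra! hopt
    set Bd := BadN δ dist m T n
    choose pick hpick using fun q σ =>
      exists_spoiling_act δ dist m q (⋃ k, SecN δ dist m T Bd k) Bd σ
    have hreach := reach_eq_zero_of_invariant δ dist T
      (fun sA sB q => sB = respond pick sA ∧ m q ≤ valA δ dist T sA q ∧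
        (m q = 0 ∨ q ∉ Sec δ dist m T Bd))
      (fun _ _ _ ⟨_, _, hq⟩ => ne_target_of_eq_zero_or_notMem_Sec δ dist m T hm hq)
      (fun sA sB q q' ⟨hsB, hopt, hq⟩ hstep => by
        subst hsB
        exact ⟨rfl, spoiling_step δ dist T hm ih hpick hq hopt hstep⟩)
      ⟨rfl, hopt, Or.inr hq⟩
    have h0 : m q = 0 :=
      le_antisymm (hopt.trans (hreach ▸ valA_le_reach δ dist T _ _ q)) (hm.nonneg q)
    exact hq (Or.inr h0)

end Spoiler

variable {A B Q D : Type} [Fintype A] [Fintype B] [Fintype Q] [Nonempty A] [Nonempty B]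
variable (δ : Q → A → B → D) (dist : D → FDist Q) (T : Q) {m : Q → ℝ}

theorem value_eq (hm : IsLfpDelta δ dist T m) (q : Q) : value δ dist T q = m q :=
  le_antisymm (value_le δ dist T hm q) (le_of_forall_pos_le_add fun ε hε => by
    obtain ⟨σ, hσ, -⟩ := exists_ofPos_optimal_off_Bad δ dist T hm hε
    linarith [hσ q, valA_le_value δ dist T (ofPos σ) q])

theorem maximizable_iff_notMem_Bad (hm : IsLfpDelta δ dist T m) {q : Q} :
    Maximizable δ dist T q ↔ q ∉ Bad δ dist m T := by
  refine ⟨fun ⟨sA, hsA⟩ hq => (valA_lt_of_mem_BadN δ dist T hm _ q hq sA).ne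
    (hsA.trans (value_eq δ dist T hm q)), fun hq => ?_⟩
  obtain ⟨σ, -, hσ⟩ := exists_ofPos_optimal_off_Bad δ dist T hm one_pos
  exact ⟨ofPos σ, le_antisymm (valA_le_value δ dist T _ q) ((value_eq δ dist T hm q).trans_le
    (hσ q hq))⟩

end CRG

theorem stmt7_general
    {A B Q D : Type} [Fintype A] [Fintype B] [Fintype Q]
    [Nonempty A] [Nonempty B]
    (δ : Q → A → B → D) (dist : D → FDist Q) (T : Q)
    (m : Q → ℝ) (hm : CRG.IsLfpDelta δ dist T m) :
    CRG.Bad δ dist m T = { q : Q | ¬ CRG.Maximizable δ dist T q } ∧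
    CRG.Sec δ dist m T (CRG.Bad δ dist m T) = { q : Q | CRG.Maximizable δ dist T q } ∧
    ∀ ε : ℝ, 0 < ε →
      ∃ sA : Q → FDist A,
        (∀ q : Q, CRG.Maximizable δ dist T q →
          CRG.valA δ dist T (CRG.ofPos sA) q = CRG.value δ dist T q) ∧
        (∀ q : Q, ¬ CRG.Maximizable δ dist T q →
          CRG.value δ dist T q - ε ≤ CRG.valA δ dist T (CRG.ofPos sA) q) := by
  have hmax := fun q => CRG.maximizable_iff_notMem_Bad δ dist T hm (q := q)
  refine ⟨by ext q; simp [hmax], by ext q; simp [CRG.Sec_Bad, hmax], fun ε hε => ?_⟩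
  obtain ⟨σ, hε, hopt⟩ := CRG.exists_ofPos_optimal_off_Bad δ dist T hm hε
  refine ⟨σ, fun q hq => ?_, fun q _ => CRG.value_eq δ dist T hm q ▸ hε q⟩
  exact le_antisymm (CRG.valA_le_value δ dist T _ q)
    (CRG.value_eq δ dist T hm q ▸ hopt q ((hmax q).1 hq))

/-- `Bad` is the set of sub-maximizable states, `Sec(Bad)` is the set of
maximizable states, and for every ε > 0 there is a positional Player A strategy optimal
from every maximizable state and ε-optimal from every sub-maximizable state. -/
theorem stmt7
    {A B Q D : Type} [Fintype A] [Fintype B] [Fintype Q] [Fintype D]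
    [Nonempty A] [Nonempty B] [Nonempty Q] [Nonempty D] [DecidableEq Q]
    (δ : Q → A → B → D) (dist : D → FDist Q) (T : Q)
    (habs : CRG.Absorbing δ dist T)
    (m : Q → ℝ) (hm : CRG.IsLfpDelta δ dist T m) :
    CRG.Bad δ dist m T = { q : Q | ¬ CRG.Maximizable δ dist T q } ∧
    CRG.Sec δ dist m T (CRG.Bad δ dist m T) = { q : Q | CRG.Maximizable δ dist T q } ∧
    ∀ ε : ℝ, 0 < ε →
      ∃ sA : Q → FDist A,
        (∀ q : Q, CRG.Maximizable δ dist T q →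
          CRG.valA δ dist T (CRG.ofPos sA) q = CRG.value δ dist T q) ∧
        (∀ q : Q, ¬ CRG.Maximizable δ dist T q →
          CRG.value δ dist T q - ε ≤ CRG.valA δ dist T (CRG.ofPos sA) q) :=
  stmt7_general δ dist T m hm
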